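/- arXiv:2002.12840 — 3 statements merged into one kernel-verified Lean document; each statement's English description precedes it below -/
import Mathlib

section
/- For every T ∈ ℕ, s ∈ {1,…,T} and x, y ∈ ℤ: E^x_y[|X_{T−s} − Y_s|] = E^x_y[|X_{T−s} − Y_{s−1}| + 1_{X_{T−s} = Y_{s−1}}] = E^x_y[|X_{T−(s−1)} − Y_{s−1}|]. -/
open MeasureTheory ProbabilityTheory

noncomputable section

namespace SwitchingIdentities

variable {Ω : Type*} [MeasurableSpace Ω]

/-- The increment `ξ` has the fair `±1` law. -/
def FairSign (P : Measure Ω) (ξ : Ω → ℤ) : Prop :=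
  P {ω | ξ ω = 1} = 1 / 2 ∧ P {ω | ξ ω = -1} = 1 / 2

/-- `ξ` and `η` are the increment families of two independent simple symmetric random
walks on `ℤ`: all increments are measurable, fair `±1` coins, and the whole family
`(ξ₀, ξ₁, …, η₀, η₁, …)` is independent. -/
def IndepSSRWIncrements (P : Measure Ω) (ξ η : ℕ → Ω → ℤ) : Prop :=
  (∀ n, Measurable (ξ n)) ∧ (∀ n, Measurable (η n)) ∧
  (∀ n, FairSign P (ξ n)) ∧ (∀ n, FairSign P (η n)) ∧
  iIndepFun (m := fun _ : ℕ ⊕ ℕ => (inferInstance : MeasurableSpace ℤ)) (Sum.elim ξ η) P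

/-- The random walk with increments `ξ` started at `x`. -/
def walk (ξ : ℕ → Ω → ℤ) (x : ℤ) (t : ℕ) (ω : Ω) : ℤ :=
  x + ∑ i ∈ Finset.range t, ξ i ω

/-!
Write `Z = X_{T-s} - Y_{s-1}`. Both `X_{T-s} - Y_s` and `X_{T-s+1} - Y_{s-1}` are `Z` plus a fair
`±1` step independent of `Z`, namely `-η_{s-1}` and `ξ_{T-s}`. For such a step `ε`,
`E|Z + ε| = E[(|Z + 1| + |Z - 1|) / 2] = E[|Z| + 1_{Z = 0}]`, so the three expectations agree.
-/

lemma abs_add_one_add_abs_sub_one (a : ℤ) :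
    |a + 1| + |a - 1| = 2 * (|a| + if a = 0 then 1 else 0) := by
  simp only [abs_eq_max_neg]
  split_ifs <;> omega

section

variable {P : Measure Ω}

lemma FairSign.ae_eq_one_or_eq_neg_one [IsProbabilityMeasure P] {ε : Ω → ℤ}
    (hε : Measurable ε) (hfair : FairSign P ε) : ∀ᵐ ω ∂P, ε ω = 1 ∨ ε ω = -1 := by
  have hdisj : Disjoint {ω | ε ω = 1} {ω | ε ω = -1} :=
    Set.disjoint_left.2 fun ω h1 h2 => by simp_all
  have hmeas : MeasurableSet {ω | ε ω = 1 ∨ ε ω = -1} :=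
    hε (measurableSet_singleton 1) |>.union (hε (measurableSet_singleton (-1)))
  rw [ae_iff_measure_eq hmeas.nullMeasurableSet, measure_univ, Set.ofPred_or,
    measure_union hdisj (hε (measurableSet_singleton _)), hfair.1, hfair.2, ENNReal.add_halves]

lemma FairSign.measureReal_eq {ε : Ω → ℤ} (hfair : FairSign P ε) :
    P.real {ω | ε ω = 1} = 1 / 2 ∧ P.real {ω | ε ω = -1} = 1 / 2 := by
  simp [measureReal_def, hfair.1, hfair.2]

lemma FairSign.neg {ε : Ω → ℤ} (hfair : FairSign P ε) : FairSign P (-ε) := by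
  simp only [FairSign, Pi.neg_apply, neg_eq_iff_eq_neg, neg_neg]
  exact hfair.symm

lemma FairSign.integrable [IsProbabilityMeasure P] {ε : Ω → ℤ}
    (hε : Measurable ε) (hfair : FairSign P ε) : Integrable (fun ω => (ε ω : ℝ)) P := by
  refine .of_bound (measurable_from_top.comp hε).aestronglyMeasurable 1 ?_
  filter_upwards [hfair.ae_eq_one_or_eq_neg_one hε] with ω hω
  rcases hω with hω | hω <;> simp [hω]

theorem integral_comp_add_of_indepFun_fairSign [IsProbabilityMeasure P]
    {Z ε : Ω → ℤ} (hZ : Measurable Z) (hε : Measurable ε) (hfair : FairSign P ε)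
    (hind : IndepFun ε Z P) {g : ℤ → ℝ} (hg_add : Integrable (fun ω => g (Z ω + 1)) P)
    (hg_sub : Integrable (fun ω => g (Z ω - 1)) P) :
    ∫ ω, g (Z ω + ε ω) ∂P = ∫ ω, (g (Z ω + 1) + g (Z ω - 1)) / 2 ∂P := by
  set A := {ω | ε ω = 1}
  set B := {ω | ε ω = -1}
  have hA : MeasurableSet[.comap ε inferInstance] A :=
    comap_measurable ε (measurableSet_singleton _)
  have hB : MeasurableSet[.comap ε inferInstance] B :=
    comap_measurable ε (measurableSet_singleton _)
  have hindep := (IndepFun_iff_Indep ε Z P).1 hind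
  calc ∫ ω, g (Z ω + ε ω) ∂P
      = ∫ ω, (A.indicator (fun ω => g (Z ω + 1)) ω
          + B.indicator (fun ω => g (Z ω - 1)) ω) ∂P := by
        refine integral_congr_ae ?_
        filter_upwards [hfair.ae_eq_one_or_eq_neg_one hε] with ω hω
        rcases hω with hω | hω <;> simp [A, B, hω, sub_eq_add_neg]
    _ = P.real A * ∫ ω, g (Z ω + 1) ∂P + P.real B * ∫ ω, g (Z ω - 1) ∂P := by
        rw [integral_add (hg_add.indicator (hε.comap_le _ hA))
            (hg_sub.indicator (hε.comap_le _ hB)), integral_indicator (hε.comap_le _ hA),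
          integral_indicator (hε.comap_le _ hB),
          hindep.setIntegral_eq_mul hε.comap_le hZ.aemeasurable hA
            (measurable_from_top (f := fun a : ℤ => g (a + 1))).aestronglyMeasurable,
          hindep.setIntegral_eq_mul hε.comap_le hZ.aemeasurable hB
            (measurable_from_top (f := fun a : ℤ => g (a - 1))).aestronglyMeasurable]
    _ = ∫ ω, (g (Z ω + 1) + g (Z ω - 1)) / 2 ∂P := by
        rw [integral_div, integral_add hg_add hg_sub, hfair.measureReal_eq.1,
          hfair.measureReal_eq.2]
        ring

theorem integral_abs_add_of_indepFun_fairSign [IsProbabilityMeasure P]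
    {Z ε : Ω → ℤ} (hZ : Measurable Z) (hε : Measurable ε) (hfair : FairSign P ε)
    (hind : IndepFun ε Z P) (hint : Integrable (fun ω => (Z ω : ℝ)) P) :
    ∫ ω, ((|Z ω + ε ω| : ℤ) : ℝ) ∂P
      = ∫ ω, (((|Z ω| : ℤ) : ℝ) + if Z ω = 0 then 1 else 0) ∂P := by
  have hint_add (c : ℤ) : Integrable (fun ω => ((|Z ω + c| : ℤ) : ℝ)) P := by
    simpa using (hint.add (integrable_const (c : ℝ))).abs
  refine (integral_comp_add_of_indepFun_fairSign (g := fun a => ((|a| : ℤ) : ℝ)) hZ hε hfair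
    hind (hint_add 1) (by simpa only [sub_eq_add_neg] using hint_add (-1))).trans
      (integral_congr_ae (ae_of_all _ fun ω => ?_))
  have hcast := congrArg (fun n : ℤ => (n : ℝ)) (abs_add_one_add_abs_sub_one (Z ω))
  push_cast at hcast ⊢
  split_ifs at hcast ⊢ <;> linarith

end

def diffIncrement (ξ η : ℕ → Ω → ℤ) : ℕ ⊕ ℕ → Ω → ℤ :=
  Sum.elim ξ fun n ω => -η n ω

lemma walk_succ {α : Type*} (ξ : ℕ → α → ℤ) (x : ℤ) (t : ℕ) (ω : α) :
    walk ξ x (t + 1) ω = walk ξ x t ω + ξ t ω := by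
  simp only [walk, Finset.sum_range_succ, add_assoc]

lemma walk_sub_walk {α : Type*} (ξ η : ℕ → α → ℤ) (x y : ℤ) (t u : ℕ) (ω : α) :
    walk ξ x t ω - walk η y u ω
      = x - y + ∑ i ∈ (Finset.range t).disjSum (Finset.range u), diffIncrement ξ η i ω := by
  simp only [walk, diffIncrement, Finset.sum_disjSum, Sum.elim_inl, Sum.elim_inr,
    Finset.sum_neg_distrib]
  ring

namespace IndepSSRWIncrements

variable {ξ η : ℕ → Ω → ℤ}

lemma measurable_diffIncrement (h : IndepSSRWIncrements P ξ η) (i : ℕ ⊕ ℕ) :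
    Measurable (diffIncrement ξ η i) := by
  obtain ⟨hξ, hη, -⟩ := h
  rcases i with n | n
  exacts [hξ n, (hη n).neg]

lemma fairSign_diffIncrement (h : IndepSSRWIncrements P ξ η) (i : ℕ ⊕ ℕ) :
    FairSign P (diffIncrement ξ η i) := by
  obtain ⟨-, -, hξ, hη, -⟩ := h
  rcases i with n | n
  exacts [hξ n, (hη n).neg]

lemma iIndepFun_diffIncrement (h : IndepSSRWIncrements P ξ η) :
    iIndepFun (diffIncrement ξ η) P := by
  obtain ⟨-, -, -, -, hindep⟩ := h
  have hneg := hindep.comp (fun i => Sum.elim (fun _ => id) (fun _ => Neg.neg) i)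
    fun _ => measurable_from_top
  convert hneg using 1
  funext i
  rcases i with n | n <;> rfl

lemma indepFun_walk_sub_walk (h : IndepSSRWIncrements P ξ η) (x y : ℤ) (t u : ℕ)
    {j : ℕ ⊕ ℕ} (hj : j ∉ (Finset.range t).disjSum (Finset.range u)) :
    IndepFun (diffIncrement ξ η j) (fun ω => walk ξ x t ω - walk η y u ω) P := by
  have hsum :=
    h.iIndepFun_diffIncrement.indepFun_finsetSum_of_notMem h.measurable_diffIncrement hj
  have htranslate :=
    hsum.symm.comp measurable_id (measurable_from_top (f := fun z : ℤ => x - y + z))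
  rw [Function.id_comp] at htranslate
  convert htranslate using 1
  funext ω
  rw [Function.comp_apply, Finset.sum_apply, walk_sub_walk]

lemma integrable_walk_sub_walk [IsProbabilityMeasure P] (h : IndepSSRWIncrements P ξ η)
    (x y : ℤ) (t u : ℕ) :
    Integrable (fun ω => ((walk ξ x t ω - walk η y u ω : ℤ) : ℝ)) P := by
  simp only [walk_sub_walk]
  push_cast
  exact (integrable_const _).add (integrable_finsetSum _ fun i _ =>
    (h.fairSign_diffIncrement i).integrable (h.measurable_diffIncrement i))

theorem integral_abs_walk_sub_walk_add [IsProbabilityMeasure P]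
    (h : IndepSSRWIncrements P ξ η) (x y : ℤ) (t u : ℕ) {j : ℕ ⊕ ℕ}
    (hj : j ∉ (Finset.range t).disjSum (Finset.range u)) :
    ∫ ω, ((|walk ξ x t ω - walk η y u ω + diffIncrement ξ η j ω| : ℤ) : ℝ) ∂P
      = ∫ ω, (((|walk ξ x t ω - walk η y u ω| : ℤ) : ℝ)
          + if walk ξ x t ω = walk η y u ω then 1 else 0) ∂P := by
  have hmeas : Measurable fun ω => walk ξ x t ω - walk η y u ω := by
    simp only [walk_sub_walk]
    exact measurable_const.add (Finset.measurable_sum _ fun i _ => h.measurable_diffIncrement i)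
  rw [integral_abs_add_of_indepFun_fairSign hmeas (h.measurable_diffIncrement j)
    (h.fairSign_diffIncrement j) (h.indepFun_walk_sub_walk x y t u hj)
    (h.integrable_walk_sub_walk x y t u)]
  simp only [sub_eq_zero]

end IndepSSRWIncrements

/-- core argument: for `1 ≤ s ≤ T` and starting points `x, y ∈ ℤ`,
`E^x_y[|X_{T−s} − Y_s|] = E^x_y[|X_{T−s} − Y_{s−1}| + 1_{X_{T−s} = Y_{s−1}}]
  = E^x_y[|X_{T−(s−1)} − Y_{s−1}|]`. -/
theorem core_identity (P : Measure Ω) [IsProbabilityMeasure P] (ξ η : ℕ → Ω → ℤ)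
    (h : IndepSSRWIncrements P ξ η) (T s : ℕ) (hs1 : 1 ≤ s) (hsT : s ≤ T) (x y : ℤ) :
    (∫ ω, ((|walk ξ x (T - s) ω - walk η y s ω| : ℤ) : ℝ) ∂P
      = ∫ ω, (((|walk ξ x (T - s) ω - walk η y (s - 1) ω| : ℤ) : ℝ)
          + (if walk ξ x (T - s) ω = walk η y (s - 1) ω then (1 : ℝ) else 0)) ∂P) ∧
    (∫ ω, (((|walk ξ x (T - s) ω - walk η y (s - 1) ω| : ℤ) : ℝ)
          + (if walk ξ x (T - s) ω = walk η y (s - 1) ω then (1 : ℝ) else 0)) ∂P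
      = ∫ ω, ((|walk ξ x (T - (s - 1)) ω - walk η y (s - 1) ω| : ℤ) : ℝ) ∂P) := by
  obtain ⟨r, rfl⟩ := Nat.exists_eq_add_of_le' hs1
  have hT : T - (r + 1 - 1) = T - (r + 1) + 1 := by omega
  rw [hT, Nat.add_sub_cancel]
  constructor
  · rw [← h.integral_abs_walk_sub_walk_add x y (T - (r + 1)) r (j := .inr r) (by simp)]
    simp only [walk_succ, diffIncrement, Sum.elim_inr, sub_add_eq_sub_sub, ← sub_eq_add_neg]
  · rw [← h.integral_abs_walk_sub_walk_add x y (T - (r + 1)) r (j := .inl (T - (r + 1)))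
      (by simp)]
    simp only [walk_succ, diffIncrement, Sum.elim_inl, sub_add_eq_add_sub]

end SwitchingIdentities
end
end

section
/- Let z ∈ ℤ and suppose there exists u ∈ ℕ with u ≤ T and (u, z) ∉ D. Then U_{μ^{Root}}(z) = U_{μ^{Root}_T}(z). In particular, on the event {τ* < T} one has U_{μ^{Root}}(Y_{τ*}) = U_{μ^{Root}_T}(Y_{τ*}). -/
/-!
For `t ≥ u` the point `(t, z)` lies outside the Root set `D`, so a walk still running at time `t`
is not at `z`, and away from `z` the function `x ↦ |z - x|` is harmonic for a fair `±1` step.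
Since the next increment is independent of the past, `t ↦ E|z - X_{ρ ∧ t}|` is constant for
`t ≥ u`. As `ρ < ∞` a.s. and the stopped walk is uniformly integrable, Vitali's theorem gives
`X_{ρ ∧ t} → X_ρ` in `L¹`, so `E|z - X_ρ|` equals the same constant: the two potentials agree
at `z`. On `{τ* < T}` the point `(T - τ*, Y_{τ*})` lies outside `D`, which gives the second claim.
-/

open MeasureTheory ProbabilityTheory

noncomputable section

namespace SwitchingIdentities

variable {Ω : Type*} [MeasurableSpace Ω]

/-- A Root continuation set: if `(t,m) ∈ D` then `(s,m) ∈ D` for all `s < t`. -/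
def IsRootCont {α : Type*} (D : Set (ℕ × α)) : Prop :=
  ∀ t m, (t, m) ∈ D → ∀ s, s < t → (s, m) ∈ D

/-- A Rost continuation set: if `(t,m) ∈ D` then `(s,m) ∈ D` for all `s > t`. -/
def IsRostCont {α : Type*} (D : Set (ℕ × α)) : Prop :=
  ∀ t m, (t, m) ∈ D → ∀ s, t < s → (s, m) ∈ D

/-- `hit D Z ω = inf {t : (t, Z_t) ∉ D}` (junk value `0` if the walk never leaves `D`). -/
def hit {α : Type*} (D : Set (ℕ × α)) (Z : ℕ → Ω → α) (ω : Ω) : ℕ :=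
  sInf {t | (t, Z t ω) ∉ D}

/-- `hitBy D Z n ω = inf {t : (t, Z_t) ∉ D} ∧ n` (equal to `n` if the walk never leaves `D`). -/
def hitBy {α : Type*} (D : Set (ℕ × α)) (Z : ℕ → Ω → α) (n : ℕ) (ω : Ω) : ℕ :=
  sInf ({t | (t, Z t ω) ∉ D} ∪ {n})

/-- `revHitBy D Z T ω = inf {t : (T − t, Z_t) ∉ D} ∧ T`, the exit time of the time-reversed
space-time walk, capped at `T`. -/
def revHitBy {α : Type*} (D : Set (ℕ × α)) (Z : ℕ → Ω → α) (T : ℕ) (ω : Ω) : ℕ :=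
  sInf ({t | (T - t, Z t ω) ∉ D} ∪ {T})

/-- The potential function `U_m(z) = −∑_x |z − x| m({x})` of a measure `m` on `ℤ`. -/
def potential (m : Measure ℤ) (z : ℤ) : ℝ :=
  -∑' w : ℤ, (|z - w| : ℤ) * (m {w}).toReal

/-- A measure on `ℤ` has a finite first moment. -/
def FiniteFirstMoment (m : Measure ℤ) : Prop :=
  Integrable (fun z : ℤ => (z : ℝ)) m

/-- `τ` is a stopping time of the natural filtration of the process `Z`:
`{τ ≤ n} ∈ σ(Z_0, …, Z_n)` for every `n`. -/
def IsNatStopping {α : Type*} [MeasurableSpace α] (Z : ℕ → Ω → α) (τ : Ω → ℕ) : Prop :=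
  ∀ n : ℕ,
    MeasurableSet[MeasurableSpace.comap (fun ω => (fun i : Fin (n + 1) => Z i ω)) inferInstance]
      {ω | τ ω ≤ n}

/-- The law `μ^{Root}` of `X_{ρ^{Root}}` where `X` has increments `ξ` and `X_0 ∼ λ`. -/
def muRoot (P : Measure Ω) (ξ : ℕ → Ω → ℤ) (D : Set (ℕ × ℤ)) (lam : Measure ℤ) : Measure ℤ :=
  Measure.map (fun p : ℤ × Ω => walk ξ p.1 (hit D (walk ξ p.1) p.2) p.2) (lam.prod P)

/-- The law `μ^{Root}_T` of `X_{ρ^{Root} ∧ T}` where `X` has increments `ξ` and `X_0 ∼ λ`. -/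
def muRootT (P : Measure Ω) (ξ : ℕ → Ω → ℤ) (D : Set (ℕ × ℤ)) (lam : Measure ℤ) (T : ℕ) :
    Measure ℤ :=
  Measure.map (fun p : ℤ × Ω => walk ξ p.1 (hitBy D (walk ξ p.1) T p.2) p.2) (lam.prod P)


open scoped ENNReal
open Filter Topology

theorem Nat.sInf_union_singleton_of_forall_lt {S : Set ℕ} {n : ℕ} (h : ∀ s < n, s ∉ S) :
    sInf (S ∪ {n}) = n :=
  le_antisymm (Nat.sInf_le (Or.inr rfl)) <| le_csInf ⟨n, Or.inr rfl⟩ fun s hs =>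
    hs.elim (fun hs => not_lt.1 fun hsn => h s hsn hs) fun hs => (Set.mem_singleton_iff.1 hs).ge

theorem Nat.sInf_union_singleton_of_le {S : Set ℕ} {s n : ℕ} (hs : s ∈ S) (hsn : s ≤ n) :
    sInf (S ∪ {n}) = sInf S := by
  rw [csInf_union (OrderBot.bddBelow _) ⟨s, hs⟩ (OrderBot.bddBelow _) (Set.singleton_nonempty n),
    csInf_singleton, min_eq_left ((Nat.sInf_le hs).trans hsn)]

theorem Nat.sInf_union_singleton_mem_of_lt {S : Set ℕ} {n : ℕ} (h : sInf (S ∪ {n}) < n) :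
    sInf (S ∪ {n}) ∈ S :=
  (Nat.sInf_mem (⟨n, Or.inr rfl⟩ : (S ∪ {n}).Nonempty)).resolve_right h.ne

theorem Int.edist_add_one_add_edist_sub_one {z m : ℤ} (hm : m ≠ z) :
    edist z (m + 1) + edist z (m - 1) = 2 * edist z m := by
  simp only [edist_dist, Int.dist_eq']
  rw [← ENNReal.ofReal_add (by positivity) (by positivity), ← ENNReal.ofReal_ofNat 2,
    ← ENNReal.ofReal_mul zero_le_two]
  congr 1
  norm_cast
  rcases (show 1 ≤ z - m ∨ z - m ≤ -1 by omega) with h | h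
  · rw [abs_of_nonneg (by omega), abs_of_nonneg (by omega), abs_of_nonneg (by omega)]; ring
  · rw [abs_of_nonpos (by omega), abs_of_nonpos (by omega), abs_of_nonpos (by omega)]; ring

theorem measurable_natSInf {γ : Type*} [MeasurableSpace γ] {S : γ → Set ℕ}
    (hS : ∀ k, MeasurableSet {p | k ∈ S p}) : Measurable fun p => sInf (S p) := by
  have hS' : ∀ k, Measurable fun p => k ∈ S p := fun k => measurableSet_setOfPred.1 (hS k)
  refine measurable_to_countable' fun n => ?_
  have hpre : (fun p => sInf (S p)) ⁻¹' {n} =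
      {p | (n ∈ S p ∨ n = 0 ∧ ∀ k, k ∉ S p) ∧ ∀ k, k < n → k ∉ S p} := by
    ext p
    simp only [Set.mem_preimage, Set.mem_singleton_iff, Set.mem_ofPred_eq]
    constructor
    · rintro rfl
      refine ⟨?_, fun k => Nat.notMem_of_lt_sInf⟩
      rcases (S p).eq_empty_or_nonempty with he | hne
      · simp [he]
      · exact Or.inl (Nat.sInf_mem hne)
    · rintro ⟨hn | ⟨rfl, he⟩, hlt⟩
      · exact le_antisymm (Nat.sInf_le hn) (not_lt.1 fun h => hlt _ h (Nat.sInf_mem ⟨n, hn⟩))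
      · rw [Set.eq_empty_of_forall_notMem he, Nat.sInf_empty]
  rw [hpre, measurableSet_setOfPred]
  exact ((hS' n).or (measurable_const.and (Measurable.forall fun k => (hS' k).not))).and
    (Measurable.forall fun k => measurable_const.imp (hS' k).not)

theorem measurable_stopped {γ β : Type*} [MeasurableSpace γ] [MeasurableSpace β]
    {w : ℕ → γ → β} (hw : ∀ n, Measurable (w n)) {σ : γ → ℕ} (hσ : Measurable σ) :
    Measurable fun p => w (σ p) p :=
  (measurable_from_prod_countable_left (f := fun q : γ × ℕ => w q.2 q.1) hw).comp
    (measurable_id.prodMk hσ)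

theorem potential_map {γ : Type*} [MeasurableSpace γ] {μ : Measure γ} [IsFiniteMeasure μ]
    {f : γ → ℤ} (hf : Measurable f) (z : ℤ) :
    potential (μ.map f) z = -(∫⁻ p, edist z (f p) ∂μ).toReal := by
  rw [potential, ← lintegral_map (measurable_of_countable _) hf, lintegral_countable',
    ENNReal.tsum_toReal_eq fun w => ENNReal.mul_ne_top (edist_ne_top _ _) (measure_ne_top _ _)]
  simp only [ENNReal.toReal_mul, ← dist_edist, Int.dist_eq']

theorem lintegral_edist_eq_of_tendsto {γ E : Type*} [MeasurableSpace γ] [PseudoEMetricSpace E]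
    {μ : Measure γ} {F : ℕ → γ → E} {G : γ → E}
    (hFG : ∀ t, AEMeasurable (fun p => edist (F t p) (G p)) μ)
    (hlim : Tendsto (fun t => ∫⁻ p, edist (F t p) (G p) ∂μ) atTop (𝓝 0)) (c : E) {L : ℝ≥0∞}
    (hL : ∀ᶠ t in atTop, ∫⁻ p, edist c (F t p) ∂μ = L) :
    ∫⁻ p, edist c (G p) ∂μ = L := by
  have htri : ∀ t, ∫⁻ p, edist c (G p) ∂μ
        ≤ ∫⁻ p, edist c (F t p) ∂μ + ∫⁻ p, edist (F t p) (G p) ∂μ ∧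
      ∫⁻ p, edist c (F t p) ∂μ ≤ ∫⁻ p, edist c (G p) ∂μ + ∫⁻ p, edist (F t p) (G p) ∂μ := by
    intro t
    rw [← lintegral_add_right' _ (hFG t), ← lintegral_add_right' _ (hFG t)]
    exact ⟨lintegral_mono fun p => edist_triangle _ _ _,
      lintegral_mono fun p => (edist_triangle _ (G p) _).trans_eq (by rw [edist_comm (G p)])⟩
  have hlim' : ∀ a, Tendsto (fun t => a + ∫⁻ p, edist (F t p) (G p) ∂μ) atTop (𝓝 a) := fun a => by
    simpa using tendsto_const_nhds.add hlim
  refine le_antisymm (ge_of_tendsto (hlim' L) ?_) (ge_of_tendsto (hlim' _) ?_) <;>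
    filter_upwards [hL] with t ht <;> rw [← ht]
  exacts [(htri t).1, (htri t).2]

theorem FairSign.lintegral_comp {P : Measure Ω} [IsProbabilityMeasure P] {e : Ω → ℤ}
    (he : Measurable e) (hfair : FairSign P e) (φ : ℤ → ℝ≥0∞) :
    ∫⁻ ω, φ (e ω) ∂P = (φ 1 + φ (-1)) / 2 := by
  have hplus : MeasurableSet {ω | e ω = 1} := he (measurableSet_singleton 1)
  have hminus : MeasurableSet {ω | e ω = -1} := he (measurableSet_singleton (-1))
  have hsign : ∀ᵐ ω ∂P, e ω = 1 ∨ e ω = -1 := by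
    refine ae_iff.2 ((prob_compl_eq_zero_iff (hplus.union hminus)).2 ?_)
    have hdisj : Disjoint {ω | e ω = 1} {ω | e ω = -1} :=
      Set.disjoint_left.2 fun ω (h1 : e ω = 1) (h2 : e ω = -1) => by omega
    rw [measure_union hdisj hminus, hfair.1, hfair.2, ENNReal.add_halves]
  calc ∫⁻ ω, φ (e ω) ∂P
      = ∫⁻ ω, ({ω | e ω = 1}.indicator (fun _ => φ 1) ω
          + {ω | e ω = -1}.indicator (fun _ => φ (-1)) ω) ∂P := by
        refine lintegral_congr_ae (hsign.mono fun ω hω => ?_)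
        rcases hω with hω | hω <;> simp [hω]
    _ = (φ 1 + φ (-1)) / 2 := by
        rw [lintegral_add_left (measurable_const.indicator hplus), lintegral_indicator_const hplus,
          lintegral_indicator_const hminus, hfair.1, hfair.2, ENNReal.div_eq_inv_mul,
          ENNReal.div_eq_inv_mul]
        ring

abbrev pastMeasurableSpace (ξ : ℕ → Ω → ℤ) (t : ℕ) : MeasurableSpace Ω :=
  MeasurableSpace.comap (fun ω (i : Fin t) => ξ i ω) inferInstance

theorem pastMeasurableSpace_le {ξ : ℕ → Ω → ℤ} (hξ : ∀ n, Measurable (ξ n)) (t : ℕ) :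
    pastMeasurableSpace ξ t ≤ ‹MeasurableSpace Ω› :=
  (measurable_pi_lambda (fun ω (i : Fin t) => ξ i ω) fun i => hξ i).comap_le

def stoppedWalk (ξ : ℕ → Ω → ℤ) (D : Set (ℕ × ℤ)) (x : ℤ) (t : ℕ) (ω : Ω) : ℤ :=
  walk ξ x (hitBy D (walk ξ x) t ω) ω

section Measurability

variable {ξ : ℕ → Ω → ℤ}

theorem measurable_walk (hξ : ∀ n, Measurable (ξ n)) (x : ℤ) (t : ℕ) :
    Measurable (walk ξ x t) :=
  measurable_const.add (Finset.measurable_sum _ fun i _ => hξ i)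

theorem measurable_stoppedWalk (hξ : ∀ n, Measurable (ξ n)) (D : Set (ℕ × ℤ)) (t : ℕ) :
    Measurable fun p : ℤ × Ω => stoppedWalk ξ D p.1 t p.2 :=
  measurable_from_prod_countable_right fun x =>
    measurable_stopped (measurable_walk hξ x) <| measurable_natSInf fun k =>
      (measurable_walk hξ x k (.of_discrete (s := {m | (k, m) ∈ D}))).compl.union (.const _)

theorem measurable_walk_hit (hξ : ∀ n, Measurable (ξ n)) (D : Set (ℕ × ℤ)) :
    Measurable fun p : ℤ × Ω => walk ξ p.1 (hit D (walk ξ p.1) p.2) p.2 :=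
  measurable_from_prod_countable_right fun x =>
    measurable_stopped (measurable_walk hξ x) <| measurable_natSInf fun k =>
      (measurable_walk hξ x k (.of_discrete (s := {m | (k, m) ∈ D}))).compl

end Measurability

namespace IndepSSRWIncrements

variable {P : Measure Ω} {ξ η : ℕ → Ω → ℤ}

theorem indep_pastMeasurableSpace (h : IndepSSRWIncrements P ξ η) (t : ℕ) :
    Indep (pastMeasurableSpace ξ t) (MeasurableSpace.comap (ξ t) inferInstance) P := by
  classical
  obtain ⟨hξ, hη, -, -, hind⟩ := h
  let S : Finset (ℕ ⊕ ℕ) := (Finset.range t).image Sum.inl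
  have hdisj : Disjoint S {Sum.inl t} := by simp [S]
  have hST := hind.indepFun_finset S {Sum.inl t} hdisj fun i => i.rec hξ hη
  have hpast : Measurable fun (g : S → ℤ) (i : Fin t) => g ⟨Sum.inl i, by simp [S]⟩ :=
    measurable_pi_lambda _ fun i => measurable_pi_apply _
  have hnext : Measurable fun g : ({Sum.inl t} : Finset (ℕ ⊕ ℕ)) → ℤ => g ⟨Sum.inl t, by simp⟩ :=
    measurable_pi_apply _
  exact (IndepFun_iff_Indep _ _ _).1 (hST.comp hpast hnext)

theorem lintegral_comp_increment [IsProbabilityMeasure P] (h : IndepSSRWIncrements P ξ η)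
    {t : ℕ} {β : Type*} [MeasurableSpace β] [Countable β] [MeasurableSingletonClass β]
    {V : Ω → β} (hV : Measurable[pastMeasurableSpace ξ t] V) (G : β → ℤ → ℝ≥0∞) :
    ∫⁻ ω, G (V ω) (ξ t ω) ∂P = ∫⁻ ω, (G (V ω) 1 + G (V ω) (-1)) / 2 ∂P := by
  have hξt : Measurable (ξ t) := h.1 t
  have hVm : Measurable V := hV.mono (pastMeasurableSpace_le h.1 t) le_rfl
  have hVξ : IndepFun V (ξ t) P :=
    (IndepFun_iff_Indep _ _ _).2 (indep_of_indep_of_le_left (h.indep_pastMeasurableSpace t)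
      hV.comap_le)
  have hG : Measurable fun q : β × ℤ => G q.1 q.2 := measurable_of_countable _
  calc ∫⁻ ω, G (V ω) (ξ t ω) ∂P
      = ∫⁻ v, ∫⁻ e, G v e ∂(P.map (ξ t)) ∂(P.map V) := by
        rw [← lintegral_prod _ hG.aemeasurable, ← (indepFun_iff_map_prod_eq_prod_map_map
          hVm.aemeasurable hξt.aemeasurable).1 hVξ, lintegral_map hG (hVm.prodMk hξt)]
    _ = ∫⁻ v, (G v 1 + G v (-1)) / 2 ∂(P.map V) := by
        refine lintegral_congr fun v => ?_
        rw [lintegral_map (measurable_of_countable _) hξt]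
        exact (h.2.2.1 t).lintegral_comp hξt (G v)
    _ = ∫⁻ ω, (G (V ω) 1 + G (V ω) (-1)) / 2 ∂P := lintegral_map (measurable_of_countable _) hVm

theorem setLIntegral_add_increment [IsProbabilityMeasure P] (h : IndepSSRWIncrements P ξ η)
    {t : ℕ} {A : Set Ω} (hA : MeasurableSet[pastMeasurableSpace ξ t] A) {Y : Ω → ℤ}
    (hY : Measurable[pastMeasurableSpace ξ t] Y) (φ : ℤ → ℝ≥0∞) :
    ∫⁻ ω in A, φ (Y ω + ξ t ω) ∂P = ∫⁻ ω in A, (φ (Y ω + 1) + φ (Y ω - 1)) / 2 ∂P := by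
  classical
  have hA' := pastMeasurableSpace_le h.1 t A hA
  have hV : Measurable[pastMeasurableSpace ξ t] fun ω => (Y ω, decide (ω ∈ A)) :=
    hY.prodMk (measurable_to_bool (by simpa [Set.preimage] using hA))
  rw [← lintegral_indicator hA', ← lintegral_indicator hA']
  convert h.lintegral_comp_increment hV (fun v e => if v.2 then φ (v.1 + e) else 0)
    using 3 with ω ω <;> by_cases hω : ω ∈ A <;> simp [hω, sub_eq_add_neg]

theorem lintegral_edist_stoppedWalk_succ [IsProbabilityMeasure P]
    (h : IndepSSRWIncrements P ξ η) (D : Set (ℕ × ℤ)) (x : ℤ) {t : ℕ} {z : ℤ} (hz : (t, z) ∉ D) :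
    ∫⁻ ω, edist z (stoppedWalk ξ D x (t + 1) ω) ∂P = ∫⁻ ω, edist z (stoppedWalk ξ D x t ω) ∂P := by
  set X := walk ξ x
  have hX : ∀ s ≤ t, Measurable[pastMeasurableSpace ξ t] (X s) := fun s hs =>
    measurable_const.add <| Finset.measurable_sum _ fun i hi =>
      (measurable_pi_apply (⟨i, (Finset.mem_range.1 hi).trans_le hs⟩ : Fin t)).comp
        (comap_measurable fun ω (j : Fin t) => ξ j ω)
  set A : Set Ω := ⋂ s ∈ Set.Iic t, {ω | (s, X s ω) ∈ D} with hAdef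
  have hA : MeasurableSet[pastMeasurableSpace ξ t] A :=
    .biInter (Set.to_countable _) fun s hs => hX s hs (.of_discrete (s := {m | (s, m) ∈ D}))
  have hA' : MeasurableSet A := pastMeasurableSpace_le h.1 t A hA
  have hmemA : ∀ ω, ω ∈ A ↔ ∀ s ≤ t, (s, X s ω) ∈ D := by simp [hAdef]
  have hrunning : ∀ ω ∈ A, ∀ n ≤ t + 1, stoppedWalk ξ D x n ω = X n ω := fun ω hω n hn =>
    congrArg (X · ω) <| Nat.sInf_union_singleton_of_forall_lt fun s hs hsD =>
      hsD ((hmemA ω).1 hω s (by omega))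
  have hstopped : ∀ ω ∉ A, stoppedWalk ξ D x (t + 1) ω = stoppedWalk ξ D x t ω := by
    intro ω hω
    obtain ⟨s, hst, hsD⟩ : ∃ s ≤ t, (s, X s ω) ∉ D := by simpa [hmemA] using hω
    exact congrArg (X · ω) <| (Nat.sInf_union_singleton_of_le hsD (by omega)).trans
      (Nat.sInf_union_singleton_of_le hsD hst).symm
  have hharmonic : ∀ ω ∈ A,
      (edist z (X t ω + 1) + edist z (X t ω - 1)) / 2 = edist z (X t ω) := by
    intro ω hω
    have hne : X t ω ≠ z := fun he => hz (he ▸ (hmemA ω).1 hω t le_rfl)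
    rw [Int.edist_add_one_add_edist_sub_one hne, mul_comm,
      ENNReal.mul_div_cancel_right two_ne_zero ENNReal.ofNat_ne_top]
  calc ∫⁻ ω, edist z (stoppedWalk ξ D x (t + 1) ω) ∂P
      = ∫⁻ ω in A, edist z (X t ω + ξ t ω) ∂P
          + ∫⁻ ω in Aᶜ, edist z (stoppedWalk ξ D x t ω) ∂P := by
        rw [← lintegral_add_compl _ hA']
        congr 1
        · refine setLIntegral_congr_fun hA' fun ω hω => ?_
          simp only [hrunning ω hω _ le_rfl, X, walk, Finset.sum_range_succ, add_assoc]
        · exact setLIntegral_congr_fun hA'.compl fun ω hω => by rw [hstopped ω hω]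
    _ = ∫⁻ ω in A, edist z (X t ω) ∂P + ∫⁻ ω in Aᶜ, edist z (stoppedWalk ξ D x t ω) ∂P := by
        rw [h.setLIntegral_add_increment hA (hX t le_rfl), setLIntegral_congr_fun hA' hharmonic]
    _ = ∫⁻ ω in A, edist z (stoppedWalk ξ D x t ω) ∂P
          + ∫⁻ ω in Aᶜ, edist z (stoppedWalk ξ D x t ω) ∂P := by
        congr 1
        exact setLIntegral_congr_fun hA' fun ω hω => by rw [hrunning ω hω t t.le_succ]
    _ = ∫⁻ ω, edist z (stoppedWalk ξ D x t ω) ∂P := lintegral_add_compl _ hA'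

theorem lintegral_edist_stoppedWalk_eq_of_le [IsProbabilityMeasure P]
    (h : IndepSSRWIncrements P ξ η) {D : Set (ℕ × ℤ)} (hD : IsRootCont D) (lam : Measure ℤ)
    {u : ℕ} {z : ℤ} (hu : (u, z) ∉ D) {t : ℕ} (hut : u ≤ t) :
    ∫⁻ p, edist z (stoppedWalk ξ D p.1 t p.2) ∂(lam.prod P)
      = ∫⁻ p, edist z (stoppedWalk ξ D p.1 u p.2) ∂(lam.prod P) := by
  induction t, hut using Nat.le_induction with
  | base => rfl
  | succ t hut ih =>
    have hz : (t, z) ∉ D := fun hmem =>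
      hu (hut.eq_or_lt.elim (fun he => he ▸ hmem) (hD t z hmem u))
    have hmeas : ∀ n, Measurable fun p : ℤ × Ω => edist z (stoppedWalk ξ D p.1 n p.2) :=
      fun n => (measurable_of_countable (edist z)).comp (measurable_stoppedWalk h.1 D n)
    rw [← ih, lintegral_prod _ (hmeas _).aemeasurable, lintegral_prod _ (hmeas _).aemeasurable]
    exact lintegral_congr fun x => h.lintegral_edist_stoppedWalk_succ D x hz

theorem potential_muRoot_eq_muRootT [IsProbabilityMeasure P] (h : IndepSSRWIncrements P ξ η)
    {D : Set (ℕ × ℤ)} (hD : IsRootCont D) (lam : Measure ℤ) [IsProbabilityMeasure lam] {T : ℕ}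
    (hfin : ∀ᵐ p ∂(lam.prod P), ∃ t, (t, walk ξ p.1 t p.2) ∉ D)
    (hUI : UniformIntegrable
      (fun (t : ℕ) (p : ℤ × Ω) => ((walk ξ p.1 (hitBy D (walk ξ p.1) t p.2) p.2 : ℤ) : ℝ))
      1 (lam.prod P))
    {u : ℕ} {z : ℤ} (huT : u ≤ T) (hu : (u, z) ∉ D) :
    potential (muRoot P ξ D lam) z = potential (muRootT P ξ D lam T) z := by
  set F : ℕ → ℤ × Ω → ℤ := fun t p => stoppedWalk ξ D p.1 t p.2
  set G : ℤ × Ω → ℤ := fun p => walk ξ p.1 (hit D (walk ξ p.1) p.2) p.2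
  have hF : ∀ t, Measurable (F t) := measurable_stoppedWalk h.1 D
  have hG : Measurable G := measurable_walk_hit h.1 D
  have hFG : ∀ᵐ p ∂(lam.prod P), Tendsto (fun t => (F t p : ℝ)) atTop (𝓝 (G p : ℝ)) := by
    filter_upwards [hfin] with p ⟨s, hs⟩
    refine tendsto_atTop_of_eventually_const fun t (hst : s ≤ t) => ?_
    exact congrArg (fun n => (walk ξ p.1 n p.2 : ℝ)) (Nat.sInf_union_singleton_of_le hs hst)
  have hL1 := tendsto_Lp_finite_of_tendsto_ae le_rfl ENNReal.one_ne_top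
    hUI.1 (hUI.memLp_of_ae_tendsto hFG) hUI.2.1 hFG
  have hconst : ∀ᶠ t in atTop, ∫⁻ p, edist z (F t p) ∂(lam.prod P)
      = ∫⁻ p, edist z (F T p) ∂(lam.prod P) :=
    (eventually_ge_atTop T).mono fun t hTt =>
      (h.lintegral_edist_stoppedWalk_eq_of_le hD lam hu (huT.trans hTt)).trans
        (h.lintegral_edist_stoppedWalk_eq_of_le hD lam hu huT).symm
  rw [show muRoot P ξ D lam = (lam.prod P).map G from rfl,
    show muRootT P ξ D lam T = (lam.prod P).map (F T) from rfl, potential_map hG,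
    potential_map (hF T)]
  congr 2
  refine lintegral_edist_eq_of_tendsto (F := F) (G := G)
    (fun t => (measurable_edist.comp ((hF t).prodMk hG)).aemeasurable) ?_ z hconst
  refine hL1.congr fun t => ?_
  rw [eLpNorm_one_eq_lintegral_enorm]
  refine lintegral_congr fun p => ?_
  rw [Pi.sub_apply, ← edist_eq_enorm_sub, edist_dist, edist_dist, Int.dist_cast_real]
  rfl

end IndepSSRWIncrements

theorem potential_agree_outside_barrier_general
    (P : Measure Ω) [IsProbabilityMeasure P] (ξ η : ℕ → Ω → ℤ)
    (h : IndepSSRWIncrements P ξ η)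
    (D : Set (ℕ × ℤ)) (hD : IsRootCont D)
    (lam : Measure ℤ) [IsProbabilityMeasure lam]
    (T : ℕ) (y : ℤ)
    (hfin : ∀ᵐ p ∂(lam.prod P), ∃ t, (t, walk ξ p.1 t p.2) ∉ D)
    (hUI : UniformIntegrable
      (fun (t : ℕ) (p : ℤ × Ω) => ((walk ξ p.1 (hitBy D (walk ξ p.1) t p.2) p.2 : ℤ) : ℝ))
      1 (lam.prod P))
    (z : ℤ) (hz : ∃ u : ℕ, u ≤ T ∧ (u, z) ∉ D) :
    potential (muRoot P ξ D lam) z = potential (muRootT P ξ D lam T) z ∧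
    ∀ ω : Ω, revHitBy D (walk η y) T ω < T →
      potential (muRoot P ξ D lam) (walk η y (revHitBy D (walk η y) T ω) ω)
        = potential (muRootT P ξ D lam T) (walk η y (revHitBy D (walk η y) T ω) ω) := by
  obtain ⟨u, huT, hu⟩ := hz
  exact ⟨h.potential_muRoot_eq_muRootT hD lam hfin hUI huT hu, fun ω hω =>
    h.potential_muRoot_eq_muRootT hD lam hfin hUI (Nat.sub_le T _)
      (Nat.sInf_union_singleton_mem_of_lt hω)⟩

/-- if `z ∈ ℤ` satisfies `(u, z) ∉ D` for some `u ≤ T`, then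
`U_{μ^{Root}}(z) = U_{μ^{Root}_T}(z)`.  In particular, on the event `{τ* < T}` one has
`U_{μ^{Root}}(Y_{τ*}) = U_{μ^{Root}_T}(Y_{τ*})`. -/
theorem potential_agree_outside_barrier
    (P : Measure Ω) [IsProbabilityMeasure P] (ξ η : ℕ → Ω → ℤ)
    (h : IndepSSRWIncrements P ξ η)
    (D : Set (ℕ × ℤ)) (hD : IsRootCont D)
    (lam : Measure ℤ) [IsProbabilityMeasure lam] (hlam : FiniteFirstMoment lam)
    (T : ℕ) (y : ℤ)
    (hfin : ∀ᵐ p ∂(lam.prod P), ∃ t, (t, walk ξ p.1 t p.2) ∉ D)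
    (hUI : UniformIntegrable
      (fun (t : ℕ) (p : ℤ × Ω) => ((walk ξ p.1 (hitBy D (walk ξ p.1) t p.2) p.2 : ℤ) : ℝ))
      1 (lam.prod P))
    (z : ℤ) (hz : ∃ u : ℕ, u ≤ T ∧ (u, z) ∉ D) :
    potential (muRoot P ξ D lam) z = potential (muRootT P ξ D lam T) z ∧
    ∀ ω : Ω, revHitBy D (walk η y) T ω < T →
      potential (muRoot P ξ D lam) (walk η y (revHitBy D (walk η y) T ω) ω)
        = potential (muRootT P ξ D lam T) (walk η y (revHitBy D (walk η y) T ω) ω) :=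
  potential_agree_outside_barrier_general P ξ η h D hD lam T y hfin hUI z hz

end SwitchingIdentities
end
end

section
/- Let D̃ ⊆ ℝ_+ × ℝ be a Rost continuation set whose complement is a closed left-barrier (i.e. (t,x) ∉ D̃ and s < t imply (s,x) ∉ D̃, and the complement is closed), let W be a one-dimensional Brownian motion started at a point x with (u,x) ∈ D̃ for some u > 0, and let ρ := inf{t > 0 : (t, W_t) ∉ D̃}. Then for every deterministic time T̃ > 0: ℙ(ρ = T̃) = 0. -/
/-!
On `{ρ = T}` the path `W = x + B` never returns to the level `W_T` during `(0, T)`: since `R` is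
closed, `(T, W_T) ∈ R`, and `W_s = W_T` with `0 < s < T` would put `(s, W_s)` in the left-barrier
`R`, so `ρ ≤ s`. By continuity `B_s - B_T` then keeps one sign on `(0, T)`.

Read backwards from `T` along a grid whose increments shrink by a factor `9` towards `T`, the
walk `B_T - B_{τ_i}` therefore stays positive, or does so for the Brownian motion `-B`. For `n`
independent centred Gaussian steps whose variances grow by a factor `9` away from the start and are
at least `σ²`, the walk started at `s` stays positive with probability at most
`(5/6)^n (1 + s⁺/σ)`: condition on the first step `X`, of standard deviation `t`, and use
`ℙ(s + X > 0) ≤ 1/2 + s⁺/(2t)` and `𝔼 (s + X)⁺ ≤ s⁺ + t`. Hence `ℙ(ρ = T) ≤ 2 (5/6)^n` for all `n`.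
-/

open MeasureTheory ProbabilityTheory

noncomputable section

namespace SwitchingIdentities

variable {Ω : Type*} [MeasurableSpace Ω]

/-- `B` is a standard one-dimensional Brownian motion (indexed by `t : ℝ`, with the defining
properties imposed for nonnegative times): measurable marginals, `B_0 = 0`, continuous paths,
Gaussian increments `B_t − B_s ∼ N(0, t − s)` for `0 ≤ s ≤ t`, and independent increments. -/
def IsStandardBM (P : Measure Ω) (B : ℝ → Ω → ℝ) : Prop :=
  (∀ t, Measurable (B t)) ∧
  (∀ ω, B 0 ω = 0) ∧
  (∀ ω, Continuous fun t => B t ω) ∧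
  (∀ s t : ℝ, 0 ≤ s → s ≤ t →
    Measure.map (fun ω => B t ω - B s ω) P = gaussianReal 0 ((t - s).toNNReal)) ∧
  (∀ (n : ℕ) (ts : Fin (n + 1) → ℝ), Monotone ts → (∀ i, 0 ≤ ts i) →
    iIndepFun
      (fun (i : Fin n) ω => B (ts i.succ) ω - B (ts i.castSucc) ω) P)

open Set Real
open scoped NNReal ENNReal

def SuffixSumsPos : {n : ℕ} → ℝ → (Fin n → ℝ) → Prop
  | 0, _, _ => True
  | _ + 1, s, y => 0 < s + y (Fin.last _) ∧ SuffixSumsPos (s + y (Fin.last _)) (Fin.init y)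

theorem suffixSumsPos_increments_iff {n : ℕ} (s : ℝ) (g : Fin (n + 1) → ℝ) :
    SuffixSumsPos s (fun i : Fin n => g i.succ - g i.castSucc) ↔
      ∀ i : Fin n, 0 < s + g (Fin.last n) - g i.castSucc := by
  induction n generalizing s with
  | zero => simp [SuffixSumsPos]
  | succ n ih =>
    have hinit : Fin.init (fun i : Fin (n + 1) => g i.succ - g i.castSucc) =
        fun i : Fin n => Fin.init g i.succ - Fin.init g i.castSucc := by
      ext i; simp [Fin.init]
    rw [SuffixSumsPos, hinit, ih, Fin.forall_fin_succ', and_comm]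
    simp only [Fin.init, Fin.succ_last]
    ring_nf

theorem measurableSet_suffixSumsPos (n : ℕ) :
    MeasurableSet {p : ℝ × (Fin n → ℝ) | SuffixSumsPos p.1 p.2} := by
  induction n with
  | zero => simp [SuffixSumsPos]
  | succ n ih =>
    have hf : Measurable fun p : ℝ × (Fin (n + 1) → ℝ) =>
        (p.1 + p.2 (Fin.last n), Fin.init p.2) := by fun_prop
    exact (measurableSet_lt measurable_const (hf.fst)).inter (hf ih)

theorem measurableSet_setOf_suffixSumsPos (n : ℕ) (s : ℝ) :
    MeasurableSet {y : Fin n → ℝ | SuffixSumsPos s y} :=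
  measurable_prodMk_left (measurableSet_suffixSumsPos n)

theorem gaussianPDFReal_le_inv_sqrt (m : ℝ) (v : ℝ≥0) (x : ℝ) :
    gaussianPDFReal m v x ≤ (√(2 * π * v))⁻¹ := by
  rw [gaussianPDFReal_def]
  refine mul_le_of_le_one_right (by positivity) (exp_le_one_iff.mpr ?_)
  exact div_nonpos_of_nonpos_of_nonneg (neg_nonpos.mpr (sq_nonneg _)) (by positivity)

theorem gaussianReal_le_mul_volume (m : ℝ) {v : ℝ≥0} (hv : v ≠ 0) (s : Set ℝ) :
    gaussianReal m v s ≤ ENNReal.ofReal (√(2 * π * v))⁻¹ * volume s := by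
  rw [gaussianReal_apply m hv, ← setLIntegral_const]
  exact lintegral_mono fun x => ENNReal.ofReal_le_ofReal (gaussianPDFReal_le_inv_sqrt m v x)

theorem gaussianReal_Ioi_zero_le_half (v : ℝ≥0) : gaussianReal 0 v (Ioi 0) ≤ 1 / 2 := by
  have hsymm : gaussianReal 0 v (Iio 0) = gaussianReal 0 v (Ioi 0) := by
    conv_rhs =>
      rw [← neg_zero, ← gaussianReal_map_neg, Measure.map_apply measurable_neg measurableSet_Ioi]
    simp [Set.neg_preimage]
  have hsum : gaussianReal 0 v (Ioi 0) + gaussianReal 0 v (Iio 0) ≤ 1 := by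
    rw [← measure_union Ioi_disjoint_Iio_same measurableSet_Iio]
    exact prob_le_one
  rw [hsymm, ← two_mul] at hsum
  rw [ENNReal.le_div_iff_mul_le (by simp) (by simp), mul_comm]
  exact hsum

theorem gaussianReal_setOf_add_pos_le {v : ℝ≥0} (hv : v ≠ 0) (s : ℝ) :
    gaussianReal 0 v {x | 0 < s + x} ≤ ENNReal.ofReal (1 / 2 + max s 0 / (2 * √v)) := by
  have hsub : {x : ℝ | 0 < s + x} ⊆ Ioc (-max s 0) 0 ∪ Ioi 0 := by
    intro x (hx : 0 < s + x)
    by_cases h : 0 < x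
    · exact Or.inr h
    · exact Or.inl ⟨by linarith [le_max_left s 0], not_lt.mp h⟩
  have hdens : (√(2 * π * v))⁻¹ ≤ (2 * √v)⁻¹ := by
    refine inv_anti₀ (by positivity) ?_
    rw [sqrt_mul' _ v.coe_nonneg]
    gcongr
    exact (le_sqrt zero_le_two (by positivity)).mpr (by nlinarith [pi_gt_three])
  calc gaussianReal 0 v {x | 0 < s + x}
      ≤ gaussianReal 0 v (Ioc (-max s 0) 0) + gaussianReal 0 v (Ioi 0) :=
        (measure_mono hsub).trans (measure_union_le _ _)
    _ ≤ ENNReal.ofReal (2 * √v)⁻¹ * ENNReal.ofReal (max s 0) + ENNReal.ofReal (1 / 2) := by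
        gcongr
        · refine (gaussianReal_le_mul_volume 0 hv _).trans ?_
          rw [Real.volume_Ioc, zero_sub, neg_neg]
          gcongr
        · rw [ENNReal.ofReal_div_of_pos two_pos]
          simpa using gaussianReal_Ioi_zero_le_half v
    _ = ENNReal.ofReal (1 / 2 + max s 0 / (2 * √v)) := by
        rw [← ENNReal.ofReal_mul (by positivity),
          ← ENNReal.ofReal_add (by positivity) (by norm_num), add_comm, inv_mul_eq_div]

theorem integral_sq_gaussianReal (v : ℝ≥0) : ∫ x, x ^ 2 ∂gaussianReal 0 v = v := by
  simpa [integral_id_gaussianReal] using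
    (variance_eq_integral (μ := gaussianReal 0 v) measurable_id'.aemeasurable).symm.trans
      variance_fun_id_gaussianReal

theorem lintegral_max_add_gaussianReal_le {v : ℝ≥0} (hv : v ≠ 0) (s : ℝ) :
    ∫⁻ x, ENNReal.ofReal (max (s + x) 0) ∂gaussianReal 0 v ≤ ENNReal.ofReal (max s 0 + √v) := by
  have ht : 0 < √(v : ℝ) := sqrt_pos.mpr (by positivity)
  set t := √(v : ℝ)
  -- AM-GM, with a majorant whose integral is `t` because `𝔼 X² = t²`.
  have hpt : ∀ x, max (s + x) 0 ≤ max s 0 + (x ^ 2 / t + t) / 2 := fun x => by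
    have hx : x ≤ (x ^ 2 / t + t) / 2 := by
      rw [div_add' _ _ _ ht.ne', div_div, le_div_iff₀ (by positivity)]
      nlinarith [sq_nonneg (x - t)]
    have : 0 ≤ (x ^ 2 / t + t) / 2 := by positivity
    exact max_le (by linarith [le_max_left s 0]) (by linarith [le_max_right s 0])
  have hsq : Integrable (fun x => x ^ 2) (gaussianReal 0 v) :=
    (memLp_id_gaussianReal 2).integrable_sq
  have hrest : Integrable (fun x => (x ^ 2 / t + t) / 2) (gaussianReal 0 v) :=
    ((hsq.div_const t).add (integrable_const t)).div_const 2
  have hmajor : Integrable (fun x => max s 0 + (x ^ 2 / t + t) / 2) (gaussianReal 0 v) :=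
    (integrable_const _).add hrest
  have hint : ∫ x, (max s 0 + (x ^ 2 / t + t) / 2) ∂gaussianReal 0 v = max s 0 + t := by
    rw [integral_add (integrable_const _) hrest, integral_div, integral_add (hsq.div_const t)
      (integrable_const t), integral_div, integral_sq_gaussianReal]
    have hvt : (v : ℝ) = t ^ 2 := (sq_sqrt v.coe_nonneg).symm
    simp only [integral_const, probReal_univ, one_smul]
    field_simp
    rw [hvt]
    ring
  calc ∫⁻ x, ENNReal.ofReal (max (s + x) 0) ∂gaussianReal 0 v
      ≤ ∫⁻ x, ENNReal.ofReal (max s 0 + (x ^ 2 / t + t) / 2) ∂gaussianReal 0 v :=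
        lintegral_mono fun x => ENNReal.ofReal_le_ofReal (hpt x)
    _ = ENNReal.ofReal (max s 0 + √v) := by
        rw [← ofReal_integral_eq_lintegral_ofReal hmajor
          (ae_of_all _ fun x => by positivity), hint]

theorem pi_suffixSumsPos_eq_lintegral {n : ℕ} (μ : Fin (n + 1) → Measure ℝ)
    [∀ i, SigmaFinite (μ i)] (s : ℝ) :
    Measure.pi μ {y | SuffixSumsPos s y} =
      ∫⁻ x, {x | 0 < s + x}.indicator
        (fun x => Measure.pi (fun j => μ j.castSucc) {z | SuffixSumsPos (s + x) z}) x
        ∂μ (Fin.last n) := by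
  have hpres := (measurePreserving_piFinSuccAbove μ (Fin.last n)).symm
  simp only [Fin.succAbove_last] at hpres
  have hA := measurableSet_setOf_suffixSumsPos (n + 1) s
  rw [← hpres.measure_preimage hA.nullMeasurableSet, Measure.prod_apply (hpres.measurable hA)]
  refine lintegral_congr fun x => ?_
  by_cases hx : 0 < s + x <;> simp [hx, SuffixSumsPos, Fin.snocEquiv]

theorem pi_gaussianReal_suffixSumsPos_le {n : ℕ} (V : Fin n → ℝ≥0) {σ : ℝ} (hσ : 0 < σ)
    (hσV : ∀ j, σ ^ 2 ≤ V j) (hV : ∀ i j, i < j → 9 * (V j : ℝ) ≤ V i) (s : ℝ) :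
    Measure.pi (fun j => gaussianReal 0 (V j)) {y | SuffixSumsPos s y} ≤
      ENNReal.ofReal ((5 / 6) ^ n * (1 + max s 0 / σ)) := by
  induction n generalizing σ s with
  | zero =>
    simp only [SuffixSumsPos, ofPred_true, measure_univ, pow_zero, one_mul]
    rw [← ENNReal.ofReal_one]
    exact ENNReal.ofReal_le_ofReal (le_add_of_nonneg_right (by positivity))
  | succ n ih =>
    set t := √(V (Fin.last n) : ℝ)
    have hvt : (V (Fin.last n) : ℝ) = t ^ 2 := (sq_sqrt (V _).coe_nonneg).symm
    have hσt : σ ≤ t := (le_sqrt hσ.le (V _).coe_nonneg).mpr (hσV _)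
    have ht : 0 < t := hσ.trans_le hσt
    have hv : V (Fin.last n) ≠ 0 := by
      intro h; rw [h, NNReal.coe_zero] at hvt; nlinarith
    set K : ℝ := (5 / 6) ^ n
    have hslice : ∀ x, {x | 0 < s + x}.indicator (fun x => Measure.pi
        (fun j : Fin n => gaussianReal 0 (V j.castSucc)) {z | SuffixSumsPos (s + x) z}) x ≤
        {x | 0 < s + x}.indicator (fun _ => ENNReal.ofReal K) x +
          ENNReal.ofReal (K / (3 * t)) * ENNReal.ofReal (max (s + x) 0) := by
      intro x
      by_cases hx : x ∈ {x | 0 < s + x}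
      · rw [indicator_of_mem hx, indicator_of_mem hx, ← ENNReal.ofReal_mul (by positivity),
          ← ENNReal.ofReal_add (by positivity) (by positivity)]
        refine (ih (fun j => V j.castSucc) (σ := 3 * t) (by positivity) (fun j => ?_)
          (fun i j hij => hV _ _ (Fin.castSucc_lt_castSucc_iff.mpr hij)) (s + x)).trans
          (le_of_eq (congrArg _ (by field_simp)))
        rw [mul_pow, ← hvt]
        linarith [hV _ _ (Fin.castSucc_lt_last j)]
      · rw [indicator_of_notMem hx]
        exact zero_le
    have hmeas : MeasurableSet {x : ℝ | 0 < s + x} :=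
      measurableSet_lt measurable_const (by fun_prop)
    rw [pi_suffixSumsPos_eq_lintegral]
    calc _ ≤ ∫⁻ x, ({x | 0 < s + x}.indicator (fun _ => ENNReal.ofReal K) x +
          ENNReal.ofReal (K / (3 * t)) * ENNReal.ofReal (max (s + x) 0))
          ∂gaussianReal 0 (V (Fin.last n)) := lintegral_mono hslice
      _ = ENNReal.ofReal K * gaussianReal 0 (V (Fin.last n)) {x | 0 < s + x} +
          ENNReal.ofReal (K / (3 * t)) *
            ∫⁻ x, ENNReal.ofReal (max (s + x) 0) ∂gaussianReal 0 (V (Fin.last n)) := by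
        rw [lintegral_add_left (measurable_const.indicator hmeas), lintegral_indicator_const hmeas,
          lintegral_const_mul _ (by fun_prop)]
      _ ≤ ENNReal.ofReal K * ENNReal.ofReal (1 / 2 + max s 0 / (2 * t)) +
          ENNReal.ofReal (K / (3 * t)) * ENNReal.ofReal (max s 0 + t) := by
        gcongr
        · exact gaussianReal_setOf_add_pos_le hv s
        · exact lintegral_max_add_gaussianReal_le hv s
      _ = ENNReal.ofReal (5 / 6 * K * (1 + max s 0 / t)) := by
        rw [← ENNReal.ofReal_mul (by positivity), ← ENNReal.ofReal_mul (by positivity),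
          ← ENNReal.ofReal_add (by positivity) (by positivity)]
        congr 1
        field_simp
        ring
      _ ≤ ENNReal.ofReal ((5 / 6) ^ (n + 1) * (1 + max s 0 / σ)) := by
        rw [pow_succ']
        gcongr

def geomGrid (T : ℝ) (n : ℕ) (i : Fin (n + 1)) : ℝ :=
  T * (1 - 9⁻¹ ^ (i : ℕ) + 9⁻¹ ^ n)

theorem geomGrid_last (T : ℝ) (n : ℕ) : geomGrid T n (Fin.last n) = T := by
  simp [geomGrid]

theorem geomGrid_succ_sub_castSucc (T : ℝ) {n : ℕ} (i : Fin n) :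
    geomGrid T n i.succ - geomGrid T n i.castSucc = 8 / 9 * T * 9⁻¹ ^ (i : ℕ) := by
  simp only [geomGrid, Fin.val_succ, Fin.val_castSucc, pow_succ]
  ring

theorem geomGrid_pos {T : ℝ} (hT : 0 < T) {n : ℕ} (i : Fin (n + 1)) : 0 < geomGrid T n i := by
  have hi : (9⁻¹ : ℝ) ^ (i : ℕ) ≤ 1 := pow_le_one₀ (by norm_num) (by norm_num)
  have hn : (0 : ℝ) < 9⁻¹ ^ n := by positivity
  exact mul_pos hT (by linarith)

theorem monotone_geomGrid {T : ℝ} (hT : 0 < T) (n : ℕ) : Monotone (geomGrid T n) :=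
  Fin.monotone_iff_le_succ.mpr fun i => sub_nonneg.mp <| by
    rw [geomGrid_succ_sub_castSucc]; positivity

theorem geomGrid_castSucc_lt {T : ℝ} (hT : 0 < T) {n : ℕ} (i : Fin n) :
    geomGrid T n i.castSucc < T := by
  have hi : (9⁻¹ : ℝ) ^ n < 9⁻¹ ^ (i : ℕ) :=
    pow_lt_pow_right_of_lt_one₀ (by norm_num) (by norm_num) i.2
  exact mul_lt_of_lt_one_right hT (by rw [Fin.val_castSucc]; linarith)

theorem IsStandardBM.neg {P : Measure Ω} {B : ℝ → Ω → ℝ} (hB : IsStandardBM P B) :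
    IsStandardBM P (fun t ω => -B t ω) := by
  obtain ⟨hmeas, h0, hcont, hlaw, hind⟩ := hB
  refine ⟨fun t => (hmeas t).neg, fun ω => by simp [h0], fun ω => (hcont ω).neg,
    fun s t hs hst => ?_, fun n ts hts hts0 => ?_⟩
  · have : (fun ω => -B t ω - -B s ω) = (fun x => -x) ∘ fun ω => B t ω - B s ω := by
      ext; simp; ring
    rw [this, ← Measure.map_map (g := fun x : ℝ => -x) (f := fun ω => B t ω - B s ω)
      measurable_neg ((hmeas t).sub (hmeas s)), hlaw s t hs hst,
      gaussianReal_map_neg, neg_zero]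
  · convert (hind n ts hts hts0).comp (fun _ x => -x) (fun _ => measurable_neg) using 1
    ext; simp; ring

theorem IsStandardBM.map_increments {P : Measure Ω} {B : ℝ → Ω → ℝ} (hB : IsStandardBM P B)
    {n : ℕ} {τ : Fin (n + 1) → ℝ} (hτ : Monotone τ) (hτ0 : ∀ i, 0 ≤ τ i) :
    P.map (fun ω (i : Fin n) => B (τ i.succ) ω - B (τ i.castSucc) ω) =
      Measure.pi fun i => gaussianReal 0 (τ i.succ - τ i.castSucc).toNNReal := by
  obtain ⟨hmeas, -, -, hlaw, hind⟩ := hB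
  rw [(hind n τ hτ hτ0).map_fun_eq_pi_map fun i => Measurable.aemeasurable (by fun_prop)]
  exact congrArg _ (funext fun i => hlaw _ _ (hτ0 _) (hτ (Fin.castSucc_le_succ i)))

theorem IsStandardBM.measure_forall_geomGrid_lt_le {P : Measure Ω} {B : ℝ → Ω → ℝ}
    (hB : IsStandardBM P B) {T : ℝ} (hT : 0 < T) (n : ℕ) :
    P {ω | ∀ i : Fin n, B (geomGrid T n i.castSucc) ω < B T ω} ≤ ENNReal.ofReal ((5 / 6) ^ n) := by
  set incr := fun ω (i : Fin n) => B (geomGrid T n i.succ) ω - B (geomGrid T n i.castSucc) ω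
  have hincr : Measurable incr :=
    measurable_pi_lambda _ fun i => (hB.1 _).sub (hB.1 _)
  have hset : {ω | ∀ i : Fin n, B (geomGrid T n i.castSucc) ω < B T ω} =
      incr ⁻¹' {y | SuffixSumsPos 0 y} := by
    ext ω
    change _ ↔ SuffixSumsPos 0 fun i : Fin n =>
      B (geomGrid T n i.succ) ω - B (geomGrid T n i.castSucc) ω
    rw [suffixSumsPos_increments_iff 0 fun j => B (geomGrid T n j) ω]
    simp [geomGrid_last]
  have hV : ∀ i : Fin n, ((geomGrid T n i.succ - geomGrid T n i.castSucc).toNNReal : ℝ) =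
      8 / 9 * T * 9⁻¹ ^ (i : ℕ) := fun i => by
    rw [geomGrid_succ_sub_castSucc, Real.coe_toNNReal _ (by positivity)]
  rw [hset, ← Measure.map_apply hincr (measurableSet_setOf_suffixSumsPos n 0),
    hB.map_increments (monotone_geomGrid hT n) fun i => (geomGrid_pos hT i).le]
  refine (pi_gaussianReal_suffixSumsPos_le _ (σ := √(8 / 9 * T * 9⁻¹ ^ n)) (by positivity)
    (fun j => ?_) (fun i j hij => ?_) 0).trans (by simp)
  · rw [sq_sqrt (by positivity), hV]
    exact mul_le_mul_of_nonneg_left (pow_le_pow_of_le_one (by norm_num) (by norm_num) j.2.le)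
      (by positivity)
  · rw [hV, hV]
    have : (9⁻¹ : ℝ) ^ (j : ℕ) ≤ 9⁻¹ ^ ((i : ℕ) + 1) :=
      pow_le_pow_of_le_one (by norm_num) (by norm_num) hij
    rw [pow_succ] at this
    nlinarith

theorem mapsTo_Ioi_or_Iio_of_sInf_hitting_eq {R : Set (ℝ × ℝ)} (hR : IsClosed R)
    (hbar : ∀ t y : ℝ, (t, y) ∈ R → ∀ s : ℝ, 0 ≤ s → s < t → (s, y) ∈ R)
    {w : ℝ → ℝ} (hw : Continuous w) {T : ℝ} (hT : 0 < T)
    (h : sInf {t | 0 < t ∧ (t, w t) ∈ R} = T) :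
    MapsTo w (Ioo 0 T) (Ioi (w T)) ∨ MapsTo w (Ioo 0 T) (Iio (w T)) := by
  set S := {t | 0 < t ∧ (t, w t) ∈ R}
  have hne : S.Nonempty := by
    by_contra hS
    rw [not_nonempty_iff_eq_empty.mp hS, Real.sInf_empty] at h
    exact hT.ne h
  have hbdd : BddBelow S := ⟨0, fun t (ht : t ∈ S) => ht.1.le⟩
  have hTR : (T, w T) ∈ R :=
    closure_minimal (t := (fun t => (t, w t)) ⁻¹' R) (fun t (ht : t ∈ S) => ht.2)
      (hR.preimage (by fun_prop)) (h ▸ csInf_mem_closure hne hbdd)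
  refine isPreconnected_Ioo.mapsTo_Ioi_or_Iio hw.continuousOn fun s hs hsT => ?_
  have hsS : s ∈ S := ⟨hs.1, hsT ▸ hbar T (w T) hTR s hs.1.le hs.2⟩
  exact (h ▸ csInf_le hbdd hsS).not_gt hs.2

theorem rost_hitting_time_no_atom_general
    (P : Measure Ω)
    (B : ℝ → Ω → ℝ) (hB : IsStandardBM P B)
    (R : Set (ℝ × ℝ)) (hRclosed : IsClosed R)
    (hRbar : ∀ t xx : ℝ, (t, xx) ∈ R → ∀ s : ℝ, 0 ≤ s → s < t → (s, xx) ∈ R)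
    (x : ℝ)
    (ρ : Ω → ℝ) (hρ : ∀ ω, ρ ω = sInf {t : ℝ | 0 < t ∧ (t, x + B t ω) ∈ R})
    (Ttil : ℝ) (hT : 0 < Ttil) :
    P {ω | ρ ω = Ttil} = 0 := by
  have hbound : ∀ n : ℕ, P {ω | ρ ω = Ttil} ≤ ENNReal.ofReal (2 * (5 / 6) ^ n) := fun n => by
    have hsub : {ω | ρ ω = Ttil} ⊆
        {ω | ∀ i : Fin n, B (geomGrid Ttil n i.castSucc) ω < B Ttil ω} ∪
          {ω | ∀ i : Fin n, -B (geomGrid Ttil n i.castSucc) ω < -B Ttil ω} := fun ω hω => by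
      have hgrid (i : Fin n) : geomGrid Ttil n i.castSucc ∈ Ioo 0 Ttil :=
        ⟨geomGrid_pos hT _, geomGrid_castSucc_lt hT i⟩
      rcases mapsTo_Ioi_or_Iio_of_sInf_hitting_eq hRclosed hRbar
          (continuous_const.add (hB.2.2.1 ω)) hT ((hρ ω).symm.trans hω) with h | h
      · exact Or.inr fun i => neg_lt_neg (add_lt_add_iff_left x |>.mp (h (hgrid i)))
      · exact Or.inl fun i => add_lt_add_iff_left x |>.mp (h (hgrid i))
    calc P {ω | ρ ω = Ttil}
        ≤ ENNReal.ofReal ((5 / 6) ^ n) + ENNReal.ofReal ((5 / 6) ^ n) :=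
          (measure_mono hsub).trans <| (measure_union_le _ _).trans <|
            add_le_add (hB.measure_forall_geomGrid_lt_le hT n)
              (hB.neg.measure_forall_geomGrid_lt_le hT n)
      _ = ENNReal.ofReal (2 * (5 / 6) ^ n) := by
          rw [← ENNReal.ofReal_add (by positivity) (by positivity), two_mul]
  have hlim : Filter.Tendsto (fun n : ℕ => ENNReal.ofReal (2 * (5 / 6) ^ n)) Filter.atTop
      (nhds 0) := by
    simpa using ENNReal.tendsto_ofReal
      ((tendsto_pow_atTop_nhds_zero_of_lt_one (by norm_num) (by norm_num)).const_mul 2)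
  exact le_antisymm (ge_of_tendsto' hlim hbound) bot_le

/-- let `R ⊆ ℝ₊ × ℝ` be a closed left-barrier (the complement of a Rost
continuation set `D̃`), let `W = x + B` be a Brownian motion started at `x` with
`(u, x) ∉ R` for some `u > 0`, and let `ρ = inf{t > 0 : (t, W_t) ∈ R}`.  Then for every
deterministic `T̃ > 0`, `ℙ(ρ = T̃) = 0`. -/
theorem rost_hitting_time_no_atom
    (P : Measure Ω) [IsProbabilityMeasure P]
    (B : ℝ → Ω → ℝ) (hB : IsStandardBM P B)
    (R : Set (ℝ × ℝ)) (hRclosed : IsClosed R) (hRpos : ∀ p ∈ R, 0 ≤ p.1)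
    (hRbar : ∀ t xx : ℝ, (t, xx) ∈ R → ∀ s : ℝ, 0 ≤ s → s < t → (s, xx) ∈ R)
    (x : ℝ) (hx : ∃ u : ℝ, 0 < u ∧ (u, x) ∉ R)
    (ρ : Ω → ℝ) (hρ : ∀ ω, ρ ω = sInf {t : ℝ | 0 < t ∧ (t, x + B t ω) ∈ R})
    (Ttil : ℝ) (hT : 0 < Ttil) :
    P {ω | ρ ω = Ttil} = 0 :=
  rost_hitting_time_no_atom_general P B hB R hRclosed hRbar x ρ hρ Ttil hT

end SwitchingIdentities
end
end
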